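/- For every b ≥ 0 there exists a finite constant C(b) (depending only on b, m, and r̃_1,…,r̃_m) such that for all t > 0 and all x ∈ ℤ: p_t(x) ≤ C(b) · min(1, t^{−1/2}) · exp( −b |x| · min(1, t^{−1/2}) ). -/

import Mathlib

open Finset

/-- `φ(θ) := Σ_{k=1}^m r̃_k (1 − cos(kθ))`. -/
noncomputable def phiFn (m : ℕ) (r : ℕ → ℝ) (θ : ℝ) : ℝ :=
  ∑ k ∈ Finset.Icc 1 m, r k * (1 - Real.cos (k * θ))

/-- The semi-discrete heat kernel
`p_t(x) := (2π)⁻¹ ∫_{−π}^{π} e^{−ixθ} e^{−tφ(θ)} dθ`, a real number since `φ` is even. -/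
noncomputable def hk (m : ℕ) (r : ℕ → ℝ) (t : ℝ) (x : ℤ) : ℝ :=
  ((2 * (Real.pi : ℂ))⁻¹ * ∫ θ in (-Real.pi)..Real.pi,
      Complex.exp (-(x : ℂ) * Complex.I * (θ : ℂ)) *
        Complex.exp (-(t : ℂ) * ((phiFn m r θ : ℝ) : ℂ))).re

/-!
The integrand `θ ↦ e^{-ixθ} e^{-tφ(θ)}` extends to an entire `2π`-periodic function, so the
integral over `[-π, π]` can be moved to the line `Im θ = a`. Taking
`a = -sign(x) · b · min(1, t^{-1/2})` produces the factor `e^{-b|x| min(1, t^{-1/2})}`. The price is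
`Re φ(θ + ia) ≥ φ(θ) - Σ r̃_k (cosh(ka) - 1)`, and `t (cosh(ka) - 1)` stays bounded because
`t a² ≤ b²`. The remaining integral `∫ e^{-tφ}` is at most `2π`, and, since
`φ(θ) ≥ (2 r̃_1 / π²) θ²` on `[-π, π]`, at most a Gaussian integral of order `t^{-1/2}`.
-/

open Real

theorem Real.exp_sub_one_le_mul_exp (u : ℝ) : exp u - 1 ≤ u * exp u := by
  have h := one_sub_le_exp_neg u
  have hexp : exp (-u) * exp u = 1 := by rw [← exp_add, neg_add_cancel, exp_zero]
  nlinarith [exp_pos u]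

theorem Real.mul_cosh_sub_one_le {t a b : ℝ} (ht : 0 ≤ t) (hta : t * a ^ 2 ≤ b ^ 2)
    (hab : a ^ 2 ≤ b ^ 2) : t * (cosh a - 1) ≤ b ^ 2 / 2 * exp (b ^ 2 / 2) := by
  have hcosh : cosh a - 1 ≤ a ^ 2 / 2 * exp (a ^ 2 / 2) :=
    (sub_le_sub_right (cosh_le_exp_half_sq a) 1).trans (exp_sub_one_le_mul_exp _)
  have hexp : exp (a ^ 2 / 2) ≤ exp (b ^ 2 / 2) := exp_le_exp.2 (by linarith)
  calc t * (cosh a - 1) ≤ t * a ^ 2 / 2 * exp (a ^ 2 / 2) := by nlinarith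
    _ ≤ b ^ 2 / 2 * exp (b ^ 2 / 2) := by gcongr

theorem intervalIntegral.integral_eq_integral_add_mul_I_of_periodic {E : Type*}
    [NormedAddCommGroup E] [NormedSpace ℂ E] [CompleteSpace E] {f : ℂ → E}
    (hf : Differentiable ℂ f) {T : ℝ} (hT : ∀ z, f (z + T) = f z) (c a : ℝ) :
    ∫ θ in c..c + T, f θ = ∫ θ in c..c + T, f (θ + a * Complex.I) := by
  have H := Complex.integral_boundary_rect_eq_zero_of_differentiableOn f c
    (((c + T : ℝ) : ℂ) + a * Complex.I) hf.differentiableOn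
  simp only [Complex.add_re, Complex.add_im, Complex.ofReal_re, Complex.ofReal_im,
    Complex.mul_re, Complex.mul_im, Complex.I_re, Complex.I_im, mul_zero, mul_one, sub_zero,
    zero_add, add_zero] at H
  have hsides : ∫ y in (0 : ℝ)..a, f (((c + T : ℝ) : ℂ) + y * Complex.I) =
      ∫ y in (0 : ℝ)..a, f (c + y * Complex.I) := by
    refine intervalIntegral.integral_congr fun y _ => ?_
    simp only [← hT ((c : ℂ) + y * Complex.I)]
    push_cast
    ring_nf
  rw [hsides, add_sub_cancel_right, sub_eq_zero] at H
  simpa using H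

noncomputable def phiFnComplex (m : ℕ) (r : ℕ → ℝ) (z : ℂ) : ℂ :=
  ∑ k ∈ Icc 1 m, (r k : ℂ) * (1 - Complex.cos (k * z))

noncomputable def hkIntegrand (m : ℕ) (r : ℕ → ℝ) (t : ℝ) (x : ℤ) (z : ℂ) : ℂ :=
  Complex.exp (-(x : ℂ) * Complex.I * z) * Complex.exp (-(t : ℂ) * phiFnComplex m r z)

section HeatKernel

variable {m : ℕ} {r : ℕ → ℝ}

theorem phiFnComplex_ofReal (θ : ℝ) : phiFnComplex m r θ = phiFn m r θ := by
  simp [phiFnComplex, phiFn]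

theorem differentiable_phiFnComplex : Differentiable ℂ (phiFnComplex m r) := by
  unfold phiFnComplex
  fun_prop

theorem phiFnComplex_add_two_pi (z : ℂ) : phiFnComplex m r (z + 2 * π) = phiFnComplex m r z := by
  refine sum_congr rfl fun k _ => ?_
  have : (k : ℂ) * (z + 2 * π) = k * z + (k : ℤ) * (2 * π) := by push_cast; ring
  rw [this, Complex.cos_add_int_mul_two_pi]

theorem re_phiFnComplex_add_mul_I (θ a : ℝ) :
    (phiFnComplex m r (θ + a * Complex.I)).re =
      ∑ k ∈ Icc 1 m, r k * (1 - cos (k * θ) * cosh (k * a)) := by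
  rw [phiFnComplex, Complex.re_sum]
  refine sum_congr rfl fun k _ => ?_
  have : (k : ℂ) * (θ + a * Complex.I) = ((k * θ : ℝ) : ℂ) + ((k * a : ℝ) : ℂ) * Complex.I := by
    push_cast; ring
  rw [this, Complex.cos_add_mul_I]
  simp only [Complex.mul_re, Complex.sub_re, Complex.one_re, Complex.ofReal_re, Complex.ofReal_im,
    Complex.I_re, Complex.I_im, Complex.cos_ofReal_re, Complex.cos_ofReal_im, Complex.sin_ofReal_re,
    Complex.sin_ofReal_im, Complex.cosh_ofReal_re, Complex.cosh_ofReal_im, Complex.sinh_ofReal_re,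
    Complex.sinh_ofReal_im, Complex.mul_im]
  ring

variable {t : ℝ} {x : ℤ}

theorem differentiable_hkIntegrand : Differentiable ℂ (hkIntegrand m r t x) := by
  have := differentiable_phiFnComplex (m := m) (r := r)
  unfold hkIntegrand
  fun_prop

theorem hkIntegrand_add_two_pi (z : ℂ) :
    hkIntegrand m r t x (z + 2 * π) = hkIntegrand m r t x z := by
  have : -(x : ℂ) * Complex.I * (z + 2 * π) =
      -x * Complex.I * z + (-x : ℤ) * (2 * π * Complex.I) := by
    push_cast; ring
  rw [hkIntegrand, hkIntegrand, phiFnComplex_add_two_pi, this, Complex.exp_add,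
    Complex.exp_int_mul_two_pi_mul_I, mul_one]

theorem norm_hkIntegrand_add_mul_I (θ a : ℝ) :
    ‖hkIntegrand m r t x (θ + a * Complex.I)‖ =
      exp (x * a - t * (phiFnComplex m r (θ + a * Complex.I)).re) := by
  rw [hkIntegrand, norm_mul, Complex.norm_exp, Complex.norm_exp, ← exp_add]
  congr 1
  simp only [neg_mul, Complex.neg_re, Complex.mul_re, Complex.intCast_re, Complex.intCast_im,
    Complex.I_re, Complex.I_im, Complex.add_re, Complex.add_im, Complex.ofReal_re,
    Complex.ofReal_im, Complex.mul_im]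
  ring

theorem hk_eq_re_integral_hkIntegrand :
    hk m r t x = (2 * π)⁻¹ * (∫ θ in -π..π, hkIntegrand m r t x θ).re := by
  simp only [hk, hkIntegrand, phiFnComplex_ofReal]
  rw [show (2 * (π : ℂ))⁻¹ = ((2 * π)⁻¹ : ℝ) by push_cast; rfl, Complex.re_ofReal_mul]

end HeatKernel

noncomputable def coshPenalty (m : ℕ) (r : ℕ → ℝ) (b : ℝ) : ℝ :=
  ∑ k ∈ Icc 1 m, r k * ((k * b) ^ 2 / 2 * exp ((k * b) ^ 2 / 2))

theorem continuous_phiFn {m : ℕ} {r : ℕ → ℝ} : Continuous (phiFn m r) := by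
  unfold phiFn
  fun_prop

section ShiftedContour

variable {m : ℕ} {r : ℕ → ℝ} (hr : ∀ k ∈ Icc 1 m, 0 ≤ r k)
include hr

theorem phiFn_sub_re_phiFnComplex_le (θ a : ℝ) :
    phiFn m r θ - (phiFnComplex m r (θ + a * Complex.I)).re ≤
      ∑ k ∈ Icc 1 m, r k * (cosh (k * a) - 1) := by
  rw [re_phiFnComplex_add_mul_I, phiFn, ← sum_sub_distrib]
  refine sum_le_sum fun k hk => ?_
  have hcosh : 0 ≤ cosh (k * a) - 1 := sub_nonneg.2 (one_le_cosh _)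
  have hcos : cos (k * θ) * (cosh (k * a) - 1) ≤ cosh (k * a) - 1 :=
    mul_le_of_le_one_left hcosh (cos_le_one _)
  nlinarith [hr k hk]

theorem mul_sum_cosh_sub_one_le {t a b : ℝ} (ht : 0 ≤ t) (hta : t * a ^ 2 ≤ b ^ 2)
    (hab : a ^ 2 ≤ b ^ 2) : t * ∑ k ∈ Icc 1 m, r k * (cosh (k * a) - 1) ≤ coshPenalty m r b := by
  rw [mul_sum, coshPenalty]
  refine sum_le_sum fun k hk => ?_
  have hk2 : (0 : ℝ) ≤ k ^ 2 := by positivity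
  have := mul_cosh_sub_one_le (a := k * a) (b := k * b) ht (by nlinarith) (by nlinarith)
  rw [mul_left_comm]
  exact mul_le_mul_of_nonneg_left this (hr k hk)

theorem norm_hkIntegrand_add_mul_I_le {t a b : ℝ} (x : ℤ) (ht : 0 ≤ t)
    (hta : t * a ^ 2 ≤ b ^ 2) (hab : a ^ 2 ≤ b ^ 2) (θ : ℝ) :
    ‖hkIntegrand m r t x (θ + a * Complex.I)‖ ≤
      exp (x * a) * exp (coshPenalty m r b) * exp (-t * phiFn m r θ) := by
  rw [norm_hkIntegrand_add_mul_I, ← exp_add, ← exp_add, exp_le_exp]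
  have := mul_le_mul_of_nonneg_left (phiFn_sub_re_phiFnComplex_le hr θ a) ht
  linarith [mul_sum_cosh_sub_one_le hr ht hta hab]

theorem hk_le_integral_exp_neg_mul_phiFn {t a b : ℝ} (x : ℤ) (ht : 0 ≤ t)
    (hta : t * a ^ 2 ≤ b ^ 2) (hab : a ^ 2 ≤ b ^ 2) :
    hk m r t x ≤ (2 * π)⁻¹ * exp (x * a) * exp (coshPenalty m r b) *
      ∫ θ in -π..π, exp (-t * phiFn m r θ) := by
  have hshift := intervalIntegral.integral_eq_integral_add_mul_I_of_periodic
    (differentiable_hkIntegrand (m := m) (r := r) (t := t) (x := x))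
    (T := 2 * π) (by exact_mod_cast hkIntegrand_add_two_pi) (-π) a
  rw [show -π + 2 * π = π by ring] at hshift
  have hnorm : ‖∫ θ in -π..π, hkIntegrand m r t x (θ + a * Complex.I)‖ ≤
      exp (x * a) * exp (coshPenalty m r b) * ∫ θ in -π..π, exp (-t * phiFn m r θ) := by
    rw [← intervalIntegral.integral_const_mul]
    refine intervalIntegral.norm_integral_le_of_norm_le (by linarith [pi_pos])
      (Filter.Eventually.of_forall fun θ _ => norm_hkIntegrand_add_mul_I_le hr x ht hta hab θ) ?_
    exact (continuous_const.mul (continuous_const.mul continuous_phiFn).rexp).intervalIntegrable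
      _ _
  rw [hk_eq_re_integral_hkIntegrand, hshift]
  simpa only [mul_assoc] using mul_le_mul_of_nonneg_left ((Complex.re_le_norm _).trans hnorm)
    (inv_nonneg.2 two_pi_pos.le)

end ShiftedContour

theorem intervalIntegral.integral_exp_neg_mul_le_sub {ψ : ℝ → ℝ} (hψ : ∀ θ, 0 ≤ ψ θ)
    {t u v : ℝ} (ht : 0 ≤ t) (huv : u ≤ v) : ∫ θ in u..v, exp (-t * ψ θ) ≤ v - u := by
  have hbound : ∀ θ ∈ Set.uIoc u v, ‖exp (-t * ψ θ)‖ ≤ 1 := fun θ _ => by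
    rw [norm_of_nonneg (exp_nonneg _), exp_le_one_iff]
    nlinarith [hψ θ]
  simpa [abs_of_nonneg (sub_nonneg.2 huv)] using
    (le_abs_self _).trans (intervalIntegral.norm_integral_le_of_norm_le_const hbound)

theorem intervalIntegral.integral_exp_neg_mul_le_of_sq_le {ψ : ℝ → ℝ} (hψ : Continuous ψ)
    {c t u v : ℝ} (hc : 0 < c) (ht : 0 < t) (huv : u ≤ v)
    (h : ∀ θ ∈ Set.Icc u v, c * θ ^ 2 ≤ ψ θ) :
    ∫ θ in u..v, exp (-t * ψ θ) ≤ √(π / c) * t ^ (-(1 / 2) : ℝ) := by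
  have hgauss : MeasureTheory.Integrable fun θ : ℝ => exp (-(t * c) * θ ^ 2) :=
    integrable_exp_neg_mul_sq (by positivity)
  calc ∫ θ in u..v, exp (-t * ψ θ) ≤ ∫ θ in u..v, exp (-(t * c) * θ ^ 2) := by
        refine intervalIntegral.integral_mono_on huv
          ((continuous_const.mul hψ).rexp.intervalIntegrable _ _) hgauss.intervalIntegrable
          fun θ hθ => exp_le_exp.2 ?_
        nlinarith [h θ hθ]
    _ ≤ ∫ θ, exp (-(t * c) * θ ^ 2) := by
        rw [intervalIntegral.integral_of_le huv]
        exact MeasureTheory.setIntegral_le_integral hgauss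
          (Filter.Eventually.of_forall fun _ => exp_nonneg _)
    _ = √(π / c) * t ^ (-(1 / 2) : ℝ) := by
        rw [integral_gaussian, rpow_neg ht.le, ← sqrt_eq_rpow, ← sqrt_inv,
          ← sqrt_mul (div_nonneg pi_pos.le hc.le), div_mul_eq_mul_div, mul_comm t,
          div_mul_eq_div_div]
        field_simp

theorem le_add_mul_min_one {X A B s : ℝ} (hA : 0 ≤ A) (hB : 0 ≤ B) (hs : 0 ≤ s) (hXA : X ≤ A)
    (hXB : X ≤ B * s) : X ≤ (A + B) * min 1 s := by
  rcases min_cases 1 s with ⟨h, -⟩ | ⟨h, -⟩ <;> rw [h] <;> nlinarith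

theorem mul_sq_min_one_rpow_neg_half_le_one {t : ℝ} (ht : 0 < t) :
    t * min 1 (t ^ (-(1 / 2) : ℝ)) ^ 2 ≤ 1 := by
  have hsq : (t ^ (-(1 / 2) : ℝ)) ^ 2 = t⁻¹ := by
    rw [← rpow_natCast, ← rpow_mul ht.le]
    norm_num [rpow_neg_one]
  calc t * min 1 (t ^ (-(1 / 2) : ℝ)) ^ 2 ≤ t * (t ^ (-(1 / 2) : ℝ)) ^ 2 := by
        gcongr
        exact min_le_right _ _
    _ = 1 := by rw [hsq, mul_inv_cancel₀ ht.ne']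

section Gaussian

variable {m : ℕ} {r : ℕ → ℝ} (hr : ∀ k ∈ Icc 1 m, 0 ≤ r k)
include hr

theorem phiFn_nonneg (θ : ℝ) : 0 ≤ phiFn m r θ :=
  sum_nonneg fun k hk => mul_nonneg (hr k hk) (sub_nonneg.2 (cos_le_one _))

theorem mul_sq_le_phiFn (hm : 1 ≤ m) {θ : ℝ} (hθ : |θ| ≤ π) :
    2 / π ^ 2 * r 1 * θ ^ 2 ≤ phiFn m r θ := by
  have hfirst : r 1 * (1 - cos θ) ≤ phiFn m r θ := by
    simpa [phiFn] using single_le_sum (f := fun k : ℕ => r k * (1 - cos (k * θ)))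
      (fun k hk => mul_nonneg (hr k hk) (sub_nonneg.2 (cos_le_one _))) (left_mem_Icc.2 hm)
  nlinarith [cos_le_one_sub_mul_cos_sq hθ, hr 1 (left_mem_Icc.2 hm)]

theorem integral_exp_neg_mul_phiFn_le (hm : 1 ≤ m) (hr₁ : 0 < r 1) {t : ℝ} (ht : 0 < t) :
    ∫ θ in -π..π, exp (-t * phiFn m r θ) ≤
      (2 * π + √(π / (2 / π ^ 2 * r 1))) * min 1 (t ^ (-(1 / 2) : ℝ)) := by
  have hπ : -π ≤ π := by linarith [pi_pos]
  refine le_add_mul_min_one two_pi_pos.le (sqrt_nonneg _) (rpow_nonneg ht.le _) ?_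
    (intervalIntegral.integral_exp_neg_mul_le_of_sq_le continuous_phiFn (by positivity) ht hπ
      fun θ hθ => mul_sq_le_phiFn hr hm (abs_le.2 hθ))
  simpa [two_mul] using intervalIntegral.integral_exp_neg_mul_le_sub (phiFn_nonneg hr) ht.le hπ

end Gaussian

theorem exists_mul_eq_neg_abs_mul (x s : ℝ) : ∃ a, x * a = -(|x| * s) ∧ a ^ 2 = s ^ 2 := by
  rcases le_total 0 x with hx | hx
  · exact ⟨-s, by rw [abs_of_nonneg hx]; ring, by ring⟩
  · exact ⟨s, by rw [abs_of_nonpos hx]; ring, rfl⟩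

theorem stmt9 (m : ℕ) (hm : 1 ≤ m) (r : ℕ → ℝ) (hr : ∀ k ∈ Finset.Icc 1 m, 0 < r k) :
    ∀ b : ℝ, 0 ≤ b → ∃ C : ℝ, ∀ t : ℝ, 0 < t → ∀ x : ℤ,
      hk m r t x ≤ C * min 1 (t ^ (-(1/2) : ℝ)) *
        Real.exp (-b * |(x : ℝ)| * min 1 (t ^ (-(1/2) : ℝ))) := by
  intro b _
  have hr₀ : ∀ k ∈ Icc 1 m, 0 ≤ r k := fun k hk => (hr k hk).le
  refine ⟨(2 * π)⁻¹ * exp (coshPenalty m r b) * (2 * π + √(π / (2 / π ^ 2 * r 1))),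
    fun t ht x => ?_⟩
  set μ := min 1 (t ^ (-(1 / 2) : ℝ))
  have hμ₀ : 0 ≤ μ := le_min zero_le_one (rpow_nonneg ht.le _)
  have hμ₁ : μ ≤ 1 := min_le_left _ _
  have htμ : t * μ ^ 2 ≤ 1 := mul_sq_min_one_rpow_neg_half_le_one ht
  obtain ⟨a, hxa, ha⟩ := exists_mul_eq_neg_abs_mul x (b * μ)
  have hta : t * a ^ 2 ≤ b ^ 2 := by
    rw [ha, mul_pow, mul_left_comm]
    exact mul_le_of_le_one_right (sq_nonneg b) htμ
  have hab : a ^ 2 ≤ b ^ 2 := by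
    rw [ha, mul_pow]
    exact mul_le_of_le_one_right (sq_nonneg b) (pow_le_one₀ hμ₀ hμ₁)
  have hkernel := hk_le_integral_exp_neg_mul_phiFn hr₀ x ht.le hta hab
  have hintegral := integral_exp_neg_mul_phiFn_le hr₀ hm (hr 1 (left_mem_Icc.2 hm)) ht
  rw [hxa, show -(|(x : ℝ)| * (b * μ)) = -b * |(x : ℝ)| * μ by ring] at hkernel
  calc hk m r t x ≤ _ := hkernel
    _ ≤ _ := mul_le_mul_of_nonneg_left hintegral (by positivity)
    _ = _ := by ring
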